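/- Let (e_0, e_1) be the standard basis of ℂ² and let ψ' = (1/√2)( e_1 ⊗ e_1 ⊗ e_1 ⊗ e_1 + e_0 ⊗ e_1 ⊗ e_1 ⊗ e_0 ), a unit vector in (ℂ²)^{⊗4}. Then the reduced density matrix of |ψ'⟩⟨ψ'| on the tensor factors (1,4) is the rank-one projection onto (1/√2)(e_0 ⊗ e_0 + e_1 ⊗ e_1), and the reduced density matrix on the factors (1,2) equals ½( |e_1⊗e_1⟩⟨e_1⊗e_1| + |e_0⊗e_1⟩⟨e_0⊗e_1| ), whose von Neumann entropy is log 2. -/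

import Mathlib

open scoped BigOperators ComplexOrder

/-- Von Neumann entropy of a (Hermitian) matrix: `-∑ λᵢ log λᵢ` over the eigenvalues,
with the convention that it is `0` for non-Hermitian matrices. -/
noncomputable def vNEntropy {n : Type*} [Fintype n] [DecidableEq n] (ρ : Matrix n n ℂ) : ℝ :=
  if h : ρ.IsHermitian then -∑ i, h.eigenvalues i * Real.log (h.eigenvalues i) else 0

/-- A density matrix: positive semidefinite with trace 1. -/
noncomputable def IsDensityMatrix {n : Type*} [Fintype n] [DecidableEq n] (ρ : Matrix n n ℂ) : Prop :=
  ρ.PosSemidef ∧ ρ.trace = 1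

/-- The pure density matrix `|ψ⟩⟨ψ|` associated to a vector `ψ`. -/
noncomputable def pureState {n : Type*} (ψ : n → ℂ) : Matrix n n ℂ :=
  Matrix.of fun p q => ψ p * star (ψ q)

variable {d₁ d₂ d₃ d₄ : ℕ}

/-- Reduced density matrix on factor 1 (partial trace over factors 2,3,4). -/
noncomputable def pt1 (ρ : Matrix (Fin d₁ × Fin d₂ × Fin d₃ × Fin d₄) (Fin d₁ × Fin d₂ × Fin d₃ × Fin d₄) ℂ) :
    Matrix (Fin d₁) (Fin d₁) ℂ :=
  Matrix.of fun i i' =>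
    ∑ b : Fin d₂, ∑ c : Fin d₃, ∑ k : Fin d₄, ρ (i, b, c, k) (i', b, c, k)

/-- Reduced density matrix on factor 3 (partial trace over factors 1,2,4). -/
noncomputable def pt3 (ρ : Matrix (Fin d₁ × Fin d₂ × Fin d₃ × Fin d₄) (Fin d₁ × Fin d₂ × Fin d₃ × Fin d₄) ℂ) :
    Matrix (Fin d₃) (Fin d₃) ℂ :=
  Matrix.of fun c c' =>
    ∑ i : Fin d₁, ∑ b : Fin d₂, ∑ k : Fin d₄, ρ (i, b, c, k) (i, b, c', k)

/-- Reduced density matrix on factor 4 (partial trace over factors 1,2,3). -/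
noncomputable def pt4 (ρ : Matrix (Fin d₁ × Fin d₂ × Fin d₃ × Fin d₄) (Fin d₁ × Fin d₂ × Fin d₃ × Fin d₄) ℂ) :
    Matrix (Fin d₄) (Fin d₄) ℂ :=
  Matrix.of fun k k' =>
    ∑ i : Fin d₁, ∑ b : Fin d₂, ∑ c : Fin d₃, ρ (i, b, c, k) (i, b, c, k')

/-- Reduced density matrix on factors (1,2) (partial trace over factors 3,4). -/
noncomputable def pt12 (ρ : Matrix (Fin d₁ × Fin d₂ × Fin d₃ × Fin d₄) (Fin d₁ × Fin d₂ × Fin d₃ × Fin d₄) ℂ) :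
    Matrix (Fin d₁ × Fin d₂) (Fin d₁ × Fin d₂) ℂ :=
  Matrix.of fun p q =>
    ∑ c : Fin d₃, ∑ k : Fin d₄, ρ (p.1, p.2, c, k) (q.1, q.2, c, k)

/-- Reduced density matrix on factors (1,4) (partial trace over factors 2,3). -/
noncomputable def pt14 (ρ : Matrix (Fin d₁ × Fin d₂ × Fin d₃ × Fin d₄) (Fin d₁ × Fin d₂ × Fin d₃ × Fin d₄) ℂ) :
    Matrix (Fin d₁ × Fin d₄) (Fin d₁ × Fin d₄) ℂ :=
  Matrix.of fun p q =>
    ∑ b : Fin d₂, ∑ c : Fin d₃, ρ (p.1, b, c, p.2) (q.1, b, c, q.2)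

/-- Reduced density matrix on factors (3,4) (partial trace over factors 1,2). -/
noncomputable def pt34 (ρ : Matrix (Fin d₁ × Fin d₂ × Fin d₃ × Fin d₄) (Fin d₁ × Fin d₂ × Fin d₃ × Fin d₄) ℂ) :
    Matrix (Fin d₃ × Fin d₄) (Fin d₃ × Fin d₄) ℂ :=
  Matrix.of fun p q =>
    ∑ i : Fin d₁, ∑ b : Fin d₂, ρ (i, b, p.1, p.2) (i, b, q.1, q.2)

/-- The standard basis vectors of `ℂ²`: `stdBasis a i = δ_{i a}`. -/
noncomputable def stdBasis (a : Fin 2) : Fin 2 → ℂ := fun i => if i = a then 1 else 0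

/-- The vector `ψ' = (1/√2)(e₁⊗e₁⊗e₁⊗e₁ + e₀⊗e₁⊗e₁⊗e₀)` in `(ℂ²)^{⊗4}`. -/
noncomputable def ψAlt : Fin 2 × Fin 2 × Fin 2 × Fin 2 → ℂ := fun p =>
  (1 / (Real.sqrt 2 : ℝ) : ℂ) *
    (stdBasis 1 p.1 * stdBasis 1 p.2.1 * stdBasis 1 p.2.2.1 * stdBasis 1 p.2.2.2 +
     stdBasis 0 p.1 * stdBasis 1 p.2.1 * stdBasis 1 p.2.2.1 * stdBasis 0 p.2.2.2)

/-- The maximally entangled unit vector `(1/√2)(e₀ ⊗ e₀ + e₁ ⊗ e₁)` in `ℂ² ⊗ ℂ²`. -/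
noncomputable def bellVec : Fin 2 × Fin 2 → ℂ := fun p =>
  (1 / (Real.sqrt 2 : ℝ) : ℂ) * (stdBasis 0 p.1 * stdBasis 0 p.2 + stdBasis 1 p.1 * stdBasis 1 p.2)

/-- The vector `e₁ ⊗ e₁` in `ℂ² ⊗ ℂ²`. -/
noncomputable def e11 : Fin 2 × Fin 2 → ℂ := fun p => stdBasis 1 p.1 * stdBasis 1 p.2

/-- The vector `e₀ ⊗ e₁` in `ℂ² ⊗ ℂ²`. -/
noncomputable def e01 : Fin 2 × Fin 2 → ℂ := fun p => stdBasis 0 p.1 * stdBasis 1 p.2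

/-!
Across the cut (1,4)|(2,3) the vector `ψ'` is the product of the Bell vector with `e₁ ⊗ e₁`, so
tracing out (2,3) leaves the Bell projection. Across the cut (1,2)|(3,4),
`ψ' = (e₁⊗e₁)⊗(e₁⊗e₁)/√2 + (e₀⊗e₁)⊗(e₁⊗e₀)/√2` is a Schmidt decomposition, so the reduced
state on (1,2) is `ρ = ½(P + Q)` for orthogonal rank-one projections `P`, `Q`. Then `ρ² = ½ ρ`
confines the spectrum of `ρ` to `{0, ½}`, and `tr ρ = 1` gives entropy `-log ½ = log 2`.
-/

open scoped Matrix

section PureState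

variable {n : Type*}

theorem pureState_eq_vecMulVec (ψ : n → ℂ) : pureState ψ = Matrix.vecMulVec ψ (star ψ) :=
  rfl

theorem pureState_smul (c : ℂ) (ψ : n → ℂ) :
    pureState (c • ψ) = (c * star c) • pureState ψ := by
  ext p q
  simp only [pureState, Matrix.of_apply, Pi.smul_apply, smul_eq_mul, star_mul', Matrix.smul_apply]
  ring

end PureState

section Entropy

open Matrix

theorem Matrix.mul_self_eq_of_mulVec_eq_smul_of_mul_self_eq_smul {n K : Type*} [Fintype n]
    [Field K] {A : Matrix n n K} {c μ : K} {v : n → K} (hA : A * A = c • A) (hv : A *ᵥ v = μ • v)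
    (hv0 : v ≠ 0) : μ * μ = c * μ := by
  refine smul_left_injective K hv0 ?_
  calc (μ * μ) • v = A *ᵥ (A *ᵥ v) := by rw [hv, mulVec_smul, hv, smul_smul]
    _ = (c * μ) • v := by rw [mulVec_mulVec, hA, smul_mulVec, hv, smul_smul]

variable {n : Type*} [Fintype n] [DecidableEq n]

theorem Matrix.IsHermitian.eigenvalues_eq_zero_or_eq_of_mul_self_eq_smul {ρ : Matrix n n ℂ}
    (hρ : ρ.IsHermitian) {c : ℝ} (hsq : ρ * ρ = (c : ℂ) • ρ) (i : n) :
    hρ.eigenvalues i = 0 ∨ hρ.eigenvalues i = c := by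
  have hv0 : (⇑(hρ.eigenvectorBasis i) : n → ℂ) ≠ 0 :=
    (WithLp.ofLp_eq_zero 2).ne.2 (hρ.eigenvectorBasis.orthonormal.ne_zero i)
  have hv := hρ.mulVec_eigenvectorBasis i
  rw [← Complex.coe_smul] at hv
  have h := mul_self_eq_of_mulVec_eq_smul_of_mul_self_eq_smul hsq hv hv0
  have h' : hρ.eigenvalues i * hρ.eigenvalues i = c * hρ.eigenvalues i := by exact_mod_cast h
  exact (mul_eq_mul_right_iff.mp h').symm

theorem vNEntropy_eq_neg_log_of_mul_self_eq_smul {ρ : Matrix n n ℂ} (hρ : ρ.IsHermitian)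
    {c : ℝ} (hsq : ρ * ρ = (c : ℂ) • ρ) (htr : ρ.trace = 1) : vNEntropy ρ = -Real.log c := by
  have hsum : ∑ i, hρ.eigenvalues i = 1 := by
    have h := hρ.trace_eq_sum_eigenvalues
    rw [htr] at h
    simp only [RCLike.ofReal_eq_complex_ofReal] at h
    exact_mod_cast h.symm
  rw [vNEntropy, dif_pos hρ]
  calc -∑ i, hρ.eigenvalues i * Real.log (hρ.eigenvalues i)
      = -∑ i, hρ.eigenvalues i * Real.log c := by
        congr 1
        refine Finset.sum_congr rfl fun i _ => ?_
        rcases hρ.eigenvalues_eq_zero_or_eq_of_mul_self_eq_smul hsq i with h | h <;> simp [h]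
    _ = -Real.log c := by rw [← Finset.sum_mul, hsum, one_mul]

theorem vNEntropy_half_smul_add_pureState {ψ φ : n → ℂ} (hψ : star ψ ⬝ᵥ ψ = 1)
    (hφ : star φ ⬝ᵥ φ = 1) (hψφ : star ψ ⬝ᵥ φ = 0) :
    vNEntropy ((1 / 2 : ℂ) • (pureState ψ + pureState φ)) = Real.log 2 := by
  have hφψ : star φ ⬝ᵥ ψ = 0 := by rw [star_dotProduct, hψφ, star_zero]
  set ρ := (1 / 2 : ℂ) • (pureState ψ + pureState φ) with hρ
  have hherm : ρ.IsHermitian :=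
    (((posSemidef_vecMulVec_self_star ψ).add (posSemidef_vecMulVec_self_star φ)).smul
      (by norm_num [Complex.le_def])).isHermitian
  have hsq : ρ * ρ = ((1 / 2 : ℝ) : ℂ) • ρ := by
    simp only [hρ, pureState_eq_vecMulVec, smul_mul_smul_comm, add_mul, mul_add,
      vecMulVec_mul_vecMulVec, hψ, hφ, hψφ, hφψ, one_smul, zero_smul, vecMulVec_zero, add_zero,
      zero_add, smul_smul]
    norm_num
  have htr : ρ.trace = 1 := by
    rw [trace_smul, trace_add, pureState_eq_vecMulVec, pureState_eq_vecMulVec, trace_vecMulVec,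
      trace_vecMulVec, dotProduct_comm, hψ, dotProduct_comm, hφ]
    norm_num
  rw [vNEntropy_eq_neg_log_of_mul_self_eq_smul hherm hsq htr, one_div, Real.log_inv, neg_neg]

end Entropy

section PartialTrace

open Matrix

variable {ψ : Fin d₁ × Fin d₂ × Fin d₃ × Fin d₄ → ℂ}

theorem pt14_pureState_of_apply_eq_mul {φ : Fin d₁ × Fin d₄ → ℂ} {χ : Fin d₂ × Fin d₃ → ℂ}
    (hψ : ∀ i b c k, ψ (i, b, c, k) = φ (i, k) * χ (b, c)) (hχ : star χ ⬝ᵥ χ = 1) :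
    pt14 (pureState ψ) = pureState φ := by
  ext p q
  have hχ' : ∑ b, ∑ c, χ (b, c) * star (χ (b, c)) = 1 := by
    rw [← Fintype.sum_prod_type', ← hχ, dotProduct_comm]; rfl
  calc pt14 (pureState ψ) p q
      = φ p * star (φ q) * ∑ b, ∑ c, χ (b, c) * star (χ (b, c)) := by
        simp only [pt14, pureState, of_apply, hψ, star_mul', Finset.mul_sum]
        congr! 2 with b _ c _
        ring
    _ = pureState φ p q := by rw [hχ', mul_one]; rfl

theorem pt12_pureState_of_apply_eq_add_mul {φ φ' : Fin d₁ × Fin d₂ → ℂ}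
    {χ χ' : Fin d₃ × Fin d₄ → ℂ}
    (hψ : ∀ i b c k, ψ (i, b, c, k) = φ (i, b) * χ (c, k) + φ' (i, b) * χ' (c, k))
    (hχ : star χ ⬝ᵥ χ = 1) (hχ' : star χ' ⬝ᵥ χ' = 1) (hχχ' : star χ ⬝ᵥ χ' = 0) :
    pt12 (pureState ψ) = pureState φ + pureState φ' := by
  have hχ'χ : star χ' ⬝ᵥ χ = 0 := by rw [star_dotProduct, hχχ', star_zero]
  ext p q
  calc pt12 (pureState ψ) p q
      = φ p * star (φ q) * (star χ ⬝ᵥ χ) + φ p * star (φ' q) * (star χ' ⬝ᵥ χ)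
        + φ' p * star (φ q) * (star χ ⬝ᵥ χ') + φ' p * star (φ' q) * (star χ' ⬝ᵥ χ') := by
        simp only [pt12, pureState, of_apply, hψ, dotProduct, Fintype.sum_prod_type,
          Finset.mul_sum, ← Finset.sum_add_distrib, Pi.star_apply]
        congr! 2 with c _ k _
        simp only [star_add, star_mul']
        ring
    _ = (pureState φ + pureState φ') p q := by
        rw [hχ, hχ', hχχ', hχ'χ]
        simp [pureState]

end PartialTrace

section AlternativePurification

noncomputable def e10 : Fin 2 × Fin 2 → ℂ := fun p => stdBasis 1 p.1 * stdBasis 0 p.2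

theorem star_e11_dotProduct_e11 : star e11 ⬝ᵥ e11 = 1 := by
  simp [dotProduct, e11, stdBasis, Fintype.sum_prod_type]

theorem star_e01_dotProduct_e01 : star e01 ⬝ᵥ e01 = 1 := by
  simp [dotProduct, e01, stdBasis, Fintype.sum_prod_type]

theorem star_e10_dotProduct_e10 : star e10 ⬝ᵥ e10 = 1 := by
  simp [dotProduct, e10, stdBasis, Fintype.sum_prod_type]

theorem star_e11_dotProduct_e01 : star e11 ⬝ᵥ e01 = 0 := by
  simp [dotProduct, e11, e01, stdBasis, Fintype.sum_prod_type]

theorem star_e11_dotProduct_e10 : star e11 ⬝ᵥ e10 = 0 := by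
  simp [dotProduct, e11, e10, stdBasis, Fintype.sum_prod_type]

theorem one_div_sqrt_two_mul_star :
    (1 / (Real.sqrt 2 : ℝ) : ℂ) * star (1 / (Real.sqrt 2 : ℝ) : ℂ) = 1 / 2 := by
  rw [Complex.star_def, map_div₀, map_one, Complex.conj_ofReal, div_mul_div_comm, one_mul,
    ← Complex.ofReal_mul, Real.mul_self_sqrt zero_le_two, Complex.ofReal_ofNat]

theorem sum_norm_sq_ψAlt : ∑ p, ‖ψAlt p‖ ^ 2 = 1 := by
  simp [ψAlt, stdBasis, Fintype.sum_prod_type, Fin.sum_univ_two]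
  norm_num

theorem ψAlt_apply_eq_bellVec_mul_e11 (i b c k : Fin 2) :
    ψAlt (i, b, c, k) = bellVec (i, k) * e11 (b, c) := by
  simp only [ψAlt, bellVec, e11]
  ring

theorem ψAlt_apply_schmidt (i b c k : Fin 2) :
    ψAlt (i, b, c, k) = ((1 / (Real.sqrt 2 : ℝ) : ℂ) • e11) (i, b) * e11 (c, k)
      + ((1 / (Real.sqrt 2 : ℝ) : ℂ) • e01) (i, b) * e10 (c, k) := by
  simp only [ψAlt, e11, e01, e10, Pi.smul_apply, smul_eq_mul]
  ring

theorem pt12_pureState_ψAlt :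
    pt12 (pureState ψAlt) = (1 / 2 : ℂ) • (pureState e11 + pureState e01) := by
  rw [pt12_pureState_of_apply_eq_add_mul ψAlt_apply_schmidt star_e11_dotProduct_e11
    star_e10_dotProduct_e10 star_e11_dotProduct_e10, pureState_smul, pureState_smul,
    one_div_sqrt_two_mul_star, smul_add]

end AlternativePurification

/-- For the unit vector `ψ' = (1/√2)(e₁⊗e₁⊗e₁⊗e₁ + e₀⊗e₁⊗e₁⊗e₀)`
in `(ℂ²)^{⊗4}`, the reduced density matrix on factors (1,4) is the rank-one projection onto
`(1/√2)(e₀⊗e₀ + e₁⊗e₁)`, while the reduced density matrix on factors (1,2) equals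
`½(|e₁⊗e₁⟩⟨e₁⊗e₁| + |e₀⊗e₁⟩⟨e₀⊗e₁|)`, whose entropy is `log 2`. -/
theorem alternative_purification_entropy_log_two :
    (∑ p, ‖ψAlt p‖ ^ 2 = 1) ∧
    pt14 (pureState ψAlt) = pureState bellVec ∧
    pt12 (pureState ψAlt) = (1 / 2 : ℂ) • (pureState e11 + pureState e01) ∧
    vNEntropy (pt12 (pureState ψAlt)) = Real.log 2 := by
  refine ⟨sum_norm_sq_ψAlt,
    pt14_pureState_of_apply_eq_mul ψAlt_apply_eq_bellVec_mul_e11 star_e11_dotProduct_e11,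
    pt12_pureState_ψAlt, ?_⟩
  rw [pt12_pureState_ψAlt]
  exact vNEntropy_half_smul_add_pureState star_e11_dotProduct_e11 star_e01_dotProduct_e01
    star_e11_dotProduct_e01
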